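/- Let H be a 3-regular (cubic) graph on n vertices with n > 6. Then m(H) ≤ 4, i.e., every connectivity code for H has at most 4 members. -/

import Mathlib

open SimpleGraph

/-- A collection `𝒢` of spanning subgraphs of `H` is a *connectivity code* for `H` if the
symmetric difference of any two distinct members of `𝒢` is a connected (spanning) subgraph
of `H`. -/
def IsConnCode {V : Type*} (H : SimpleGraph V) (𝒢 : Set (SimpleGraph V)) : Prop :=
  (∀ G ∈ 𝒢, G ≤ H) ∧
    ∀ G₁ ∈ 𝒢, ∀ G₂ ∈ 𝒢, G₁ ≠ G₂ → (symmDiff G₁ G₂).Connected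

/-- `mCode H` is the maximum possible cardinality of a connectivity code for `H`. -/
noncomputable def mCode {V : Type*} [Fintype V] (H : SimpleGraph V) : ℕ :=
  sSup {n : ℕ | ∃ 𝒢 : Set (SimpleGraph V), IsConnCode H 𝒢 ∧ 𝒢.ncard = n}

/-- The set of edges of `H` with one endpoint in `W` and the other in its complement. -/
def cutEdgeSet {V : Type*} (H : SimpleGraph V) (W : Set V) : Set (Sym2 V) :=
  {e | e ∈ H.edgeSet ∧ ∃ x ∈ W, ∃ y ∈ Wᶜ, e = s(x, y)}

/-- The edge-connectivity of `H`: the minimum number of edges whose deletion disconnects `H`. -/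
noncomputable def edgeConn {V : Type*} [Fintype V] (H : SimpleGraph V) : ℕ :=
  sInf {n : ℕ | ∃ F : Set (Sym2 V), F ⊆ H.edgeSet ∧ F.ncard = n ∧
    ¬(H.deleteEdges F).Connected}

/-!
Take five members of a connectivity code of a cubic graph with `n` vertices and `m = 3n/2` edges,
so `n` is even. Each pairwise symmetric difference is connected and spanning, hence has at least
`n - 1` edges; when the two members have edge counts of equal parity it has an even number of
edges, hence at least `n`. An edge lies in the symmetric differences of at most `⌊5²/2⌋ = 12`
ordered pairs of members, and at most `12` ordered pairs have edge counts of different parity.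
Summing over the `20` ordered pairs of distinct members gives `20n ≤ 12(m + 1) = 18n + 12`.
-/

open Finset
open scoped symmDiff

theorem Finset.card_symmDiff_add_two_mul_card_inter {α : Type*} [DecidableEq α]
    (s t : Finset α) : #(s ∆ t) + 2 * #(s ∩ t) = #s + #t := by
  rw [symmDiff_eq_sup_sdiff_inf, sup_eq_union, inf_eq_inter,
    card_sdiff_of_subset inter_subset_union, ← card_union_add_card_inter]
  have := card_le_card (inter_subset_union (s := s) (t := t))
  omega

theorem card_filter_apply_fst_ne_apply_snd_le {ι : Type*} [Fintype ι] (P : ι → Bool) :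
    #{q : ι × ι | P q.1 ≠ P q.2} ≤ Fintype.card ι ^ 2 / 2 := by
  classical
  set A : Finset ι := {i | P i}
  have hsplit : ({q : ι × ι | P q.1 ≠ P q.2} : Finset (ι × ι)) = A ×ˢ Aᶜ ∪ Aᶜ ×ˢ A := by
    ext ⟨i, j⟩
    cases hi : P i <;> cases hj : P j <;> simp [A, hi, hj]
  have hdisj : Disjoint (A ×ˢ Aᶜ) (Aᶜ ×ˢ A) :=
    disjoint_product.mpr (Or.inl disjoint_compl_right)
  obtain ⟨b, hb⟩ := Nat.exists_eq_add_of_le (card_le_univ A)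
  rw [hsplit, card_union_of_disjoint hdisj, card_product, card_product, card_compl, hb,
    Nat.add_sub_cancel_left, Nat.le_div_iff_mul_le two_pos]
  nlinarith [sq_nonneg ((#A : ℤ) - b)]

theorem sum_card_symmDiff_le {α ι : Type*} [DecidableEq α] [Fintype ι] {E : Finset α}
    (W : ι → Finset α) (hW : ∀ i, W i ⊆ E) :
    ∑ q : ι × ι, #(W q.1 ∆ W q.2) ≤ Fintype.card ι ^ 2 / 2 * #E := by
  classical
  let r : ι × ι → α → Prop := fun q e => e ∈ W q.1 ∆ W q.2
  have habove (q : ι × ι) : E.bipartiteAbove r q = W q.1 ∆ W q.2 := by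
    refine filter_mem_eq_inter.trans (inter_eq_right.mpr ?_)
    exact (symmDiff_le_sup (a := W q.1)).trans (union_subset (hW q.1) (hW q.2))
  have hbelow (e : α) : #(univ.bipartiteBelow r e) ≤ Fintype.card ι ^ 2 / 2 := by
    convert card_filter_apply_fst_ne_apply_snd_le fun i => decide (e ∈ W i) using 2
    ext q
    simp only [bipartiteBelow, mem_symmDiff, mem_filter, mem_univ, true_and, ne_eq,
      decide_eq_decide, r]
    tauto
  calc ∑ q : ι × ι, #(W q.1 ∆ W q.2)
      = ∑ q : ι × ι, #(E.bipartiteAbove r q) := by simp only [habove]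
    _ = ∑ e ∈ E, #(univ.bipartiteBelow r e) :=
      sum_card_bipartiteAbove_eq_sum_card_bipartiteBelow r
    _ ≤ ∑ _e ∈ E, Fintype.card ι ^ 2 / 2 := sum_le_sum fun e _ => hbelow e
    _ = Fintype.card ι ^ 2 / 2 * #E := by rw [sum_const, smul_eq_mul, mul_comm]

theorem card_mul_pred_mul_le_of_le_card_symmDiff_add_one {α ι : Type*} [DecidableEq α]
    [Fintype ι] {E : Finset α} {n : ℕ} (W : ι → Finset α) (hW : ∀ i, W i ⊆ E) (hn : Even n)
    (hsep : ∀ i j, i ≠ j → n ≤ #(W i ∆ W j) + 1) :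
    Fintype.card ι * (Fintype.card ι - 1) * n ≤ Fintype.card ι ^ 2 / 2 * (#E + 1) := by
  classical
  let P : ι → Bool := fun i => decide (Even #(W i))
  have hpair : ∀ q ∈ (univ : Finset ι).offDiag,
      n ≤ #(W q.1 ∆ W q.2) + if P q.1 ≠ P q.2 then 1 else 0 := by
    rintro ⟨i, j⟩ hij
    dsimp only
    have hle : n ≤ #(W i ∆ W j) + 1 := hsep i j (mem_offDiag.mp hij).2.2
    have hcard := card_symmDiff_add_two_mul_card_inter (W i) (W j)
    split_ifs with hP
    · exact hle
    · simp only [P, ne_eq, decide_eq_decide, Nat.even_iff, not_not] at hP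
      rw [Nat.even_iff] at hn
      omega
  calc Fintype.card ι * (Fintype.card ι - 1) * n = ∑ _q ∈ (univ : Finset ι).offDiag, n := by
        rw [sum_const, smul_eq_mul, offDiag_card, card_univ, Nat.mul_sub_one]
    _ ≤ ∑ q ∈ (univ : Finset ι).offDiag,
          (#(W q.1 ∆ W q.2) + if P q.1 ≠ P q.2 then 1 else 0) := sum_le_sum hpair
    _ ≤ ∑ q : ι × ι, (#(W q.1 ∆ W q.2) + if P q.1 ≠ P q.2 then 1 else 0) :=
        sum_le_sum_of_subset (subset_univ _)
    _ = ∑ q : ι × ι, #(W q.1 ∆ W q.2) + #{q : ι × ι | P q.1 ≠ P q.2} := by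
        rw [sum_add_distrib, sum_boole, Nat.cast_id]
    _ ≤ Fintype.card ι ^ 2 / 2 * #E + Fintype.card ι ^ 2 / 2 :=
        add_le_add (sum_card_symmDiff_le W hW) (card_filter_apply_fst_ne_apply_snd_le P)
    _ = Fintype.card ι ^ 2 / 2 * (#E + 1) := by ring

namespace SimpleGraph

theorem edgeSet_symmDiff {V : Type*} (G₁ G₂ : SimpleGraph V) :
    (G₁ ∆ G₂).edgeSet = G₁.edgeSet ∆ G₂.edgeSet := by
  simp only [symmDiff_def, edgeSet_sup, edgeSet_sdiff, Set.sup_eq_union]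

theorem Connected.card_le_card_edgeFinset_symmDiff_add_one {V : Type*} [Fintype V]
    [DecidableEq V] {G₁ G₂ : SimpleGraph V} [Fintype G₁.edgeSet] [Fintype G₂.edgeSet]
    (h : (G₁ ∆ G₂).Connected) : Fintype.card V ≤ #(G₁.edgeFinset ∆ G₂.edgeFinset) + 1 := by
  have := h.card_vert_le_card_edgeSet_add_one
  rwa [Nat.card_eq_fintype_card, Nat.card_coe_set_eq, edgeSet_symmDiff, ← coe_edgeFinset,
    ← coe_edgeFinset, ← coe_symmDiff, Set.ncard_coe_finset] at this

theorem IsRegularOfDegree.two_mul_card_edgeFinset {V : Type*} [Fintype V] {G : SimpleGraph V}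
    [DecidableRel G.Adj] {d : ℕ} (h : G.IsRegularOfDegree d) :
    2 * #G.edgeFinset = d * Fintype.card V := by
  rw [← sum_degrees_eq_twice_card_edges, sum_congr rfl fun v _ => h.degree_eq v, sum_const,
    card_univ, smul_eq_mul, mul_comm]

end SimpleGraph

theorem IsConnCode.ncard_le_four {V : Type*} [Fintype V] {H : SimpleGraph V}
    [DecidableRel H.Adj] {𝒢 : Set (SimpleGraph V)} (h𝒢 : IsConnCode H 𝒢)
    (hn : 6 < Fintype.card V) (hreg : H.IsRegularOfDegree 3) : 𝒢.ncard ≤ 4 := by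
  classical
  by_contra! h5
  have : Finite 𝒢 := Set.finite_of_ncard_pos (by omega)
  have : Fintype 𝒢 := Fintype.ofFinite _
  obtain ⟨f⟩ : Nonempty (Fin 5 ↪ 𝒢) := Function.Embedding.nonempty_of_card_le <| by
    rwa [Fintype.card_fin, ← Nat.card_eq_fintype_card, Nat.card_coe_set_eq]
  have hE := hreg.two_mul_card_edgeFinset
  have hbound := card_mul_pred_mul_le_of_le_card_symmDiff_add_one (E := H.edgeFinset)
    (n := Fintype.card V) (fun i => (f i : SimpleGraph V).edgeFinset)
    (fun i => edgeFinset_mono (h𝒢.1 _ (f i).2))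
    (by rw [Nat.even_iff]; omega) fun i j hij =>
      (h𝒢.2 _ (f i).2 _ (f j).2 (Subtype.coe_injective.ne (f.injective.ne hij))
        ).card_le_card_edgeFinset_symmDiff_add_one
  simp only [Fintype.card_fin] at hbound
  omega

/-- Every cubic graph `H` on more than `6` vertices satisfies `m(H) ≤ 4`. -/
theorem stmt14 {V : Type*} [Fintype V] (H : SimpleGraph V)
    (hn : 6 < Fintype.card V)
    (hreg : ∀ v : V, (H.neighborSet v).ncard = 3) :
    mCode H ≤ 4 := by
  classical
  have hreg' : H.IsRegularOfDegree 3 := fun v => by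
    rw [← card_neighborSet_eq_degree, ← Nat.card_eq_fintype_card, Nat.card_coe_set_eq, hreg v]
  exact csSup_le' fun k ⟨𝒢, h𝒢, hk⟩ => hk ▸ h𝒢.ncard_le_four hn hreg'
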